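/- arXiv:1710.07003 — 2 statements merged into one kernel-verified Lean document; each statement's English description precedes it below -/
import Mathlib

section
/- Fractional Bellman–Gronwall lemma: let ε ≥ 0, λ ≥ 0, α ∈ (0,1), and let x ∈ C([0,T], ℝ) satisfy |x(t)| ≤ ε + (λ/Γ(α)) ∫₀^t |x(τ)|/(t−τ)^{1−α} dτ for all t ∈ [0,T]. Then |x(t)| ≤ ε E_α(λ t^α) ≤ ε E_α(λ T^α) for all t ∈ [0,T], where E_α is the Mittag-Leffler function. -/
open MeasureTheory Real Set Filter Topology
open scoped ENNReal NNReal

noncomputable def RLint (α : ℝ) {E : Type*} [NormedAddCommGroup E] [NormedSpace ℝ E]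
    (φ : ℝ → E) (t : ℝ) : E :=
  (Real.Gamma α)⁻¹ • ∫ τ in (0:ℝ)..t, ((t - τ) ^ (α - 1)) • φ τ

noncomputable def RLderiv (α : ℝ) {E : Type*} [NormedAddCommGroup E] [NormedSpace ℝ E]
    (x : ℝ → E) (t : ℝ) : E :=
  deriv (fun s => (Real.Gamma (1 - α))⁻¹ • ∫ τ in (0:ℝ)..s, ((s - τ) ^ (-α)) • x τ) t

noncomputable def CaputoD (α : ℝ) {E : Type*} [NormedAddCommGroup E] [NormedSpace ℝ E]
    (x : ℝ → E) (t : ℝ) : E :=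
  RLderiv α (fun s => x s - x 0) t

noncomputable def mittagLeffler (α z : ℝ) : ℝ := ∑' k : ℕ, z ^ k / Real.Gamma (α * k + 1)

/-!
Starting from a bound `M` for `u` on `[0, T]` and iterating the inequality `n` times gives
`u t ≤ ε * ∑_{k<n} (λ t^α)^k / Γ(αk+1) + M * (λ t^α)^n / Γ(αn+1)`: by the Beta integral, the
Riemann–Liouville integral sends `τ^(αk)` to `Γ(αk+1) / Γ(αk+α+1) * t^(αk+α)`, so each iteration
adds the next Mittag-Leffler term. The remainder tends to `0` because the Mittag-Leffler series
converges, by the ratio test and the bound `Γ(x+1) ≤ Γ(x+α) (x+α)^(1-α)`, which comes from the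
log-convexity of `Γ`.
-/

namespace Real

lemma Gamma_add_one_le_Gamma_add_mul_rpow {x α : ℝ} (hx : 0 < x) (hα : α ∈ Ioo (0 : ℝ) 1) :
    Gamma (x + 1) ≤ Gamma (x + α) * (x + α) ^ (1 - α) := by
  obtain ⟨hα0, hα1⟩ := hα
  have hxα : 0 < x + α := by linarith
  have hG : 0 < Gamma (x + α) := Gamma_pos_of_pos hxα
  have h := Gamma_mul_add_mul_le_rpow_Gamma_mul_rpow_Gamma hxα (by linarith : 0 < x + α + 1)
    hα0 (by linarith : 0 < 1 - α) (by ring)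
  calc Gamma (x + 1) = Gamma (α * (x + α) + (1 - α) * (x + α + 1)) := by ring_nf
    _ ≤ Gamma (x + α) ^ α * ((x + α) * Gamma (x + α)) ^ (1 - α) := by
      rwa [Gamma_add_one hxα.ne'] at h
    _ = Gamma (x + α) * (x + α) ^ (1 - α) := by
      rw [mul_rpow hxα.le hG.le, mul_left_comm, ← rpow_add hG, add_sub_cancel, rpow_one,
        mul_comm]

lemma tendsto_Gamma_div_Gamma_add_atTop {α : ℝ} (hα : α ∈ Ioo (0 : ℝ) 1) :
    Tendsto (fun x => Gamma x / Gamma (x + α)) atTop (𝓝 0) := by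
  obtain ⟨hα0, hα1⟩ := hα
  have hshift : Tendsto (fun x : ℝ => x + α) atTop atTop :=
    tendsto_atTop_add_const_right _ _ tendsto_id
  have hbound : Tendsto (fun x : ℝ => (1 + α / x) * (x + α) ^ (-α)) atTop (𝓝 0) := by
    simpa using ((tendsto_const_nhds.div_atTop tendsto_id).const_add 1).mul
      ((tendsto_rpow_neg_atTop hα0).comp hshift)
  refine squeeze_zero' ?_ ?_ hbound
  · filter_upwards [eventually_gt_atTop 0] with x hx
    exact div_nonneg (Gamma_pos_of_pos hx).le (Gamma_pos_of_pos (by linarith)).le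
  · filter_upwards [eventually_gt_atTop 0] with x hx
    have hxα : 0 < x + α := by linarith
    have h := Gamma_add_one_le_Gamma_add_mul_rpow hx ⟨hα0, hα1⟩
    rw [Gamma_add_one hx.ne'] at h
    have hsplit : (x + α) ^ (1 - α) = (x + α) * (x + α) ^ (-α) := by
      rw [sub_eq_add_neg, rpow_add hxα, rpow_one]
    rw [div_le_iff₀ (Gamma_pos_of_pos hxα)]
    calc Gamma x = x * Gamma x / x := by field_simp
      _ ≤ Gamma (x + α) * (x + α) ^ (1 - α) / x := by gcongr
      _ = (1 + α / x) * (x + α) ^ (-α) * Gamma (x + α) := by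
        rw [hsplit]; field_simp

end Real

noncomputable def mittagLefflerTerm (α : ℝ) (k : ℕ) (z : ℝ) : ℝ := z ^ k / Gamma (α * k + 1)

@[simp] lemma mittagLefflerTerm_zero (α z : ℝ) : mittagLefflerTerm α 0 z = 1 := by
  simp [mittagLefflerTerm]

lemma abs_mittagLefflerTerm_succ {α : ℝ} (hα : 0 < α) (k : ℕ) (z : ℝ) :
    |mittagLefflerTerm α (k + 1) z|
      = |z| * (Gamma (α * k + 1) / Gamma (α * k + 1 + α)) * |mittagLefflerTerm α k z| := by
  have hk : 0 < α * k + 1 := by positivity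
  have hΓ := Gamma_pos_of_pos hk
  have hΓ' := Gamma_pos_of_pos (by linarith : 0 < α * k + 1 + α)
  simp only [mittagLefflerTerm, abs_div, abs_pow, abs_of_pos hΓ, abs_of_pos hΓ', Nat.cast_succ,
    show α * (k + 1) + 1 = α * k + 1 + α by ring]
  field_simp
  ring

lemma summable_mittagLefflerTerm {α : ℝ} (hα : α ∈ Ioo (0 : ℝ) 1) (z : ℝ) :
    Summable (fun k => mittagLefflerTerm α k z) := by
  have hratio : Tendsto (fun k : ℕ => |z| * (Gamma (α * k + 1) / Gamma (α * k + 1 + α))) atTop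
      (𝓝 0) := by
    simpa using ((Real.tendsto_Gamma_div_Gamma_add_atTop hα).comp
      (tendsto_atTop_add_const_right _ 1
        ((tendsto_natCast_atTop_atTop).const_mul_atTop hα.1))).const_mul |z|
  refine summable_of_ratio_norm_eventually_le (r := 1 / 2) (by norm_num) ?_
  filter_upwards [hratio.eventually (ge_mem_nhds (by norm_num : (0 : ℝ) < 1 / 2))] with k hk
  simp only [Real.norm_eq_abs, abs_mittagLefflerTerm_succ hα.1]
  exact mul_le_mul_of_nonneg_right hk (abs_nonneg _)

lemma mittagLeffler_mono {α : ℝ} (hα : α ∈ Ioo (0 : ℝ) 1) :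
    MonotoneOn (mittagLeffler α) (Ici 0) := by
  intro z hz w _ hzw
  refine (summable_mittagLefflerTerm hα z).tsum_le_tsum (fun k => ?_)
    (summable_mittagLefflerTerm hα w)
  have hα0 := hα.1
  have hΓ := Gamma_pos_of_pos (by positivity : 0 < α * k + 1)
  gcongr

lemma integral_rpow_mul_rpow_sub {a b t : ℝ} (ha : 0 < a) (hb : 0 < b) (ht : 0 < t) :
    ∫ τ in (0 : ℝ)..t, τ ^ (a - 1) * (t - τ) ^ (b - 1)
      = Gamma a * Gamma b / Gamma (a + b) * t ^ (a + b - 1) := by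
  have hbeta := Complex.betaIntegral_scaled a b ht
  rw [Complex.betaIntegral_eq_Gamma_mul_div _ _ (by simpa using ha) (by simpa using hb)] at hbeta
  have hcast : ∀ τ ∈ uIcc 0 t, ((τ ^ (a - 1) * (t - τ) ^ (b - 1) : ℝ) : ℂ)
      = (τ : ℂ) ^ ((a : ℂ) - 1) * ((t : ℂ) - τ) ^ ((b : ℂ) - 1) := by
    intro τ hτ
    rw [uIcc_of_le ht.le] at hτ
    push_cast
    rw [Complex.ofReal_cpow hτ.1, Complex.ofReal_cpow (sub_nonneg.2 hτ.2)]
    push_cast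
    rfl
  apply Complex.ofReal_injective
  rw [← intervalIntegral.integral_ofReal, intervalIntegral.integral_congr hcast, hbeta]
  push_cast
  rw [Complex.ofReal_cpow ht.le, ← Complex.Gamma_ofReal, ← Complex.Gamma_ofReal,
    ← Complex.Gamma_ofReal]
  push_cast
  ring

section RiemannLiouville

variable {α t : ℝ}

lemma RLint_congr {E : Type*} [NormedAddCommGroup E] [NormedSpace ℝ E] {f g : ℝ → E}
    (ht : 0 ≤ t) (hfg : EqOn f g (Icc 0 t)) : RLint α f t = RLint α g t := by
  unfold RLint
  congr 1
  refine intervalIntegral.integral_congr fun τ hτ => ?_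
  rw [uIcc_of_le ht] at hτ
  simp only [hfg hτ]

lemma RLint_const_mul (c : ℝ) (f : ℝ → ℝ) :
    RLint α (fun τ => c * f τ) t = c * RLint α f t := by
  simp only [RLint, smul_eq_mul, mul_left_comm _ c, intervalIntegral.integral_const_mul]

lemma RLint_eq_integral_div (f : ℝ → ℝ) (ht : 0 ≤ t) :
    RLint α f t = (Gamma α)⁻¹ * ∫ τ in (0 : ℝ)..t, f τ / (t - τ) ^ (1 - α) := by
  unfold RLint
  rw [smul_eq_mul]
  congr 1
  refine intervalIntegral.integral_congr fun τ hτ => ?_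
  rw [uIcc_of_le ht] at hτ
  rw [smul_eq_mul, div_eq_inv_mul, ← rpow_neg (sub_nonneg.2 hτ.2), neg_sub]

lemma intervalIntegrable_rpow_sub_mul (hα : 0 < α) (ht : 0 ≤ t) {f : ℝ → ℝ}
    (hf : ContinuousOn f (Icc 0 t)) :
    IntervalIntegrable (fun τ => (t - τ) ^ (α - 1) * f τ) volume 0 t := by
  refine IntervalIntegrable.mul_continuousOn ?_ (by rwa [uIcc_of_le ht])
  simpa using ((intervalIntegral.intervalIntegrable_rpow' (by linarith : -1 < α - 1)
    (a := 0) (b := t)).comp_sub_left t).symm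

lemma RLint_add (hα : 0 < α) (ht : 0 ≤ t) {f g : ℝ → ℝ} (hf : ContinuousOn f (Icc 0 t))
    (hg : ContinuousOn g (Icc 0 t)) :
    RLint α (fun τ => f τ + g τ) t = RLint α f t + RLint α g t := by
  simp only [RLint, smul_eq_mul, mul_add]
  rw [intervalIntegral.integral_add (intervalIntegrable_rpow_sub_mul hα ht hf)
    (intervalIntegrable_rpow_sub_mul hα ht hg), mul_add]

lemma RLint_finsetSum {ι : Type*} (s : Finset ι) (hα : 0 < α) (ht : 0 ≤ t) {f : ι → ℝ → ℝ}
    (hf : ∀ i ∈ s, ContinuousOn (f i) (Icc 0 t)) :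
    RLint α (fun τ => ∑ i ∈ s, f i τ) t = ∑ i ∈ s, RLint α (f i) t := by
  simp only [RLint, smul_eq_mul, Finset.mul_sum]
  rw [intervalIntegral.integral_finsetSum fun i hi =>
    intervalIntegrable_rpow_sub_mul hα ht (hf i hi), Finset.mul_sum]

lemma RLint_mono (hα : 0 < α) (ht : 0 ≤ t) {f g : ℝ → ℝ} (hf : ContinuousOn f (Icc 0 t))
    (hg : ContinuousOn g (Icc 0 t)) (hfg : ∀ τ ∈ Icc 0 t, f τ ≤ g τ) :
    RLint α f t ≤ RLint α g t := by
  simp only [RLint, smul_eq_mul]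
  refine mul_le_mul_of_nonneg_left (intervalIntegral.integral_mono_on ht
    (intervalIntegrable_rpow_sub_mul hα ht hf) (intervalIntegrable_rpow_sub_mul hα ht hg)
    fun τ hτ => ?_) (inv_nonneg.2 (Gamma_pos_of_pos hα).le)
  exact mul_le_mul_of_nonneg_left (hfg τ hτ) (rpow_nonneg (sub_nonneg.2 hτ.2) _)

lemma RLint_rpow {β : ℝ} (hα : 0 < α) (hβ : -1 < β) (ht : 0 < t) :
    RLint α (fun τ => τ ^ β) t = Gamma (β + 1) / Gamma (β + α + 1) * t ^ (β + α) := by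
  have hbeta := integral_rpow_mul_rpow_sub (by linarith : 0 < β + 1) hα ht
  simp only [add_sub_cancel_right, add_right_comm β 1 α, add_sub_cancel_right] at hbeta
  simp only [RLint, smul_eq_mul, mul_comm _ (_ ^ β), hbeta]
  field_simp [(Gamma_pos_of_pos hα).ne']

end RiemannLiouville

lemma continuous_mittagLefflerTerm_mul_rpow {α : ℝ} (hα : 0 < α) (k : ℕ) (lam : ℝ) :
    Continuous fun τ => mittagLefflerTerm α k (lam * τ ^ α) :=
  (((continuous_rpow_const hα.le).const_mul lam).pow k).div_const _

lemma mul_RLint_mittagLefflerTerm {α lam t : ℝ} (hα : 0 < α) (ht : 0 ≤ t) (k : ℕ) :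
    lam * RLint α (fun τ => mittagLefflerTerm α k (lam * τ ^ α)) t
      = mittagLefflerTerm α (k + 1) (lam * t ^ α) := by
  rcases ht.eq_or_lt with rfl | ht
  · simp [RLint, mittagLefflerTerm, zero_rpow hα.ne']
  have hpow : EqOn (fun τ => mittagLefflerTerm α k (lam * τ ^ α))
      (fun τ => lam ^ k / Gamma (α * k + 1) * τ ^ (α * k)) (Icc 0 t) := by
    intro τ hτ
    simp only [mittagLefflerTerm, mul_pow, rpow_mul_natCast hτ.1]
    ring
  have hαk : 0 ≤ α * k := by positivity
  have hΓ := (Gamma_pos_of_pos (by linarith : 0 < α * k + 1)).ne'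
  rw [RLint_congr ht.le hpow, RLint_const_mul, RLint_rpow hα (by linarith) ht]
  simp only [mittagLefflerTerm, mul_pow, ← rpow_mul_natCast ht.le, Nat.cast_succ,
    show α * k + α = α * (k + 1) by ring]
  field_simp
  ring

noncomputable def fractionalGronwallBound (α lam ε M : ℝ) (n : ℕ) (t : ℝ) : ℝ :=
  ε * ∑ k ∈ Finset.range n, mittagLefflerTerm α k (lam * t ^ α)
    + M * mittagLefflerTerm α n (lam * t ^ α)

section FractionalGronwallBound

variable {α lam ε M : ℝ}

lemma continuous_fractionalGronwallBound (hα : 0 < α) (n : ℕ) :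
    Continuous (fractionalGronwallBound α lam ε M n) :=
  (continuous_const.mul (continuous_finsetSum _ fun k _ =>
    continuous_mittagLefflerTerm_mul_rpow hα k lam)).add
    (continuous_const.mul (continuous_mittagLefflerTerm_mul_rpow hα n lam))

lemma add_mul_RLint_fractionalGronwallBound {t : ℝ} (hα : 0 < α) (ht : 0 ≤ t) (n : ℕ) :
    ε + lam * RLint α (fractionalGronwallBound α lam ε M n) t
      = fractionalGronwallBound α lam ε M (n + 1) t := by
  have hcont : ∀ k, ContinuousOn (fun τ => mittagLefflerTerm α k (lam * τ ^ α)) (Icc 0 t) :=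
    fun k => (continuous_mittagLefflerTerm_mul_rpow hα k lam).continuousOn
  have hS : ContinuousOn
      (fun τ => ε * ∑ k ∈ Finset.range n, mittagLefflerTerm α k (lam * τ ^ α)) (Icc 0 t) :=
    continuousOn_const.mul (continuousOn_finsetSum _ fun k _ => hcont k)
  have hR : ContinuousOn (fun τ => M * mittagLefflerTerm α n (lam * τ ^ α)) (Icc 0 t) :=
    continuousOn_const.mul (hcont n)
  unfold fractionalGronwallBound
  rw [RLint_add hα ht hS hR, RLint_const_mul, RLint_const_mul,
    RLint_finsetSum _ hα ht fun k _ => hcont k, Finset.sum_range_succ', mittagLefflerTerm_zero]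
  simp only [mul_add, Finset.mul_sum, mul_left_comm lam, mul_RLint_mittagLefflerTerm hα ht]
  ring

lemma tendsto_fractionalGronwallBound (hα : α ∈ Ioo (0 : ℝ) 1) (t : ℝ) :
    Tendsto (fun n => fractionalGronwallBound α lam ε M n t) atTop
      (𝓝 (ε * mittagLeffler α (lam * t ^ α))) := by
  have hsum := summable_mittagLefflerTerm hα (lam * t ^ α)
  have hlim :=
    (hsum.hasSum.tendsto_sum_nat.const_mul ε).add (hsum.tendsto_atTop_zero.const_mul M)
  rwa [mul_zero, add_zero] at hlim

end FractionalGronwallBound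

section FractionalGronwall

variable {u : ℝ → ℝ} {T α lam ε : ℝ}

lemma le_fractionalGronwallBound {M : ℝ} (hα : 0 < α) (hlam : 0 ≤ lam)
    (hu : ContinuousOn u (Icc 0 T)) (h : ∀ t ∈ Icc 0 T, u t ≤ ε + lam * RLint α u t)
    (hM : ∀ t ∈ Icc 0 T, u t ≤ M) (n : ℕ) :
    ∀ t ∈ Icc 0 T, u t ≤ fractionalGronwallBound α lam ε M n t := by
  induction n with
  | zero => simpa [fractionalGronwallBound] using hM
  | succ n ih =>
    intro t ht
    have hsub : Icc 0 t ⊆ Icc 0 T := Icc_subset_Icc_right ht.2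
    calc u t ≤ ε + lam * RLint α u t := h t ht
      _ ≤ ε + lam * RLint α (fractionalGronwallBound α lam ε M n) t := by
        gcongr
        exact RLint_mono hα ht.1 (hu.mono hsub)
          (continuous_fractionalGronwallBound hα n).continuousOn fun τ hτ => ih τ (hsub hτ)
      _ = fractionalGronwallBound α lam ε M (n + 1) t :=
        add_mul_RLint_fractionalGronwallBound hα ht.1 n

theorem le_mul_mittagLeffler_of_le_add_mul_RLint (hα : α ∈ Ioo (0 : ℝ) 1) (hlam : 0 ≤ lam)
    (hu : ContinuousOn u (Icc 0 T)) (h : ∀ t ∈ Icc 0 T, u t ≤ ε + lam * RLint α u t) :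
    ∀ t ∈ Icc 0 T, u t ≤ ε * mittagLeffler α (lam * t ^ α) := by
  obtain ⟨M, hM⟩ := isCompact_Icc.exists_bound_of_continuousOn hu
  intro t ht
  exact ge_of_tendsto' (tendsto_fractionalGronwallBound hα t) fun n =>
    le_fractionalGronwallBound hα.1 hlam hu h (fun s hs => (le_abs_self _).trans (hM s hs)) n t ht

end FractionalGronwall

theorem fractional_gronwall_general
    (T : ℝ) (α : ℝ) (hα : α ∈ Set.Ioo (0:ℝ) 1)
    (ε lam : ℝ) (hε : 0 ≤ ε) (hlam : 0 ≤ lam)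
    (x : ℝ → ℝ) (hx : ContinuousOn x (Set.Icc (0:ℝ) T))
    (h : ∀ t ∈ Set.Icc (0:ℝ) T,
      |x t| ≤ ε + (lam / Real.Gamma α) * ∫ τ in (0:ℝ)..t, |x τ| / (t - τ) ^ (1 - α)) :
    ∀ t ∈ Set.Icc (0:ℝ) T,
      |x t| ≤ ε * mittagLeffler α (lam * t ^ α) ∧
      ε * mittagLeffler α (lam * t ^ α) ≤ ε * mittagLeffler α (lam * T ^ α) := by
  have hRL : ∀ t ∈ Icc 0 T, |x t| ≤ ε + lam * RLint α (fun τ => |x τ|) t := fun t ht => by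
    rw [RLint_eq_integral_div _ ht.1, ← mul_assoc, ← div_eq_mul_inv]
    exact h t ht
  intro t ht
  refine ⟨le_mul_mittagLeffler_of_le_add_mul_RLint hα hlam hx.abs hRL t ht, ?_⟩
  have hT : 0 ≤ T := ht.1.trans ht.2
  gcongr
  exact mittagLeffler_mono hα (mul_nonneg hlam (rpow_nonneg ht.1 α))
    (mul_nonneg hlam (rpow_nonneg hT α))
    (mul_le_mul_of_nonneg_left (rpow_le_rpow ht.1 ht.2 hα.1.le) hlam)

/-- Fractional Bellman–Gronwall lemma. -/
theorem fractional_gronwall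
    (T : ℝ) (hT : 0 < T) (α : ℝ) (hα : α ∈ Set.Ioo (0:ℝ) 1)
    (ε lam : ℝ) (hε : 0 ≤ ε) (hlam : 0 ≤ lam)
    (x : ℝ → ℝ) (hx : ContinuousOn x (Set.Icc (0:ℝ) T))
    (h : ∀ t ∈ Set.Icc (0:ℝ) T,
      |x t| ≤ ε + (lam / Real.Gamma α) * ∫ τ in (0:ℝ)..t, |x τ| / (t - τ) ^ (1 - α)) :
    ∀ t ∈ Set.Icc (0:ℝ) T,
      |x t| ≤ ε * mittagLeffler α (lam * t ^ α) ∧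
      ε * mittagLeffler α (lam * t ^ α) ≤ ε * mittagLeffler α (lam * T ^ α) :=
  fractional_gronwall_general T α hα ε lam hε hlam x hx h
end

section
/- Key inequality: if V : ℝ^n → ℝ is convex and differentiable with locally Lipschitz gradient, x : [0,t] → ℝ^n is Lipschitz, and φ(τ) = V(x(τ)) − V(x(t)) − ⟨∇V(x(t)), x(τ) − x(t)⟩, then 0 ≤ φ(τ) ≤ λ_V H² (t−τ)^{2α} for τ ∈ [0,t], where H is a Hölder-α constant of x on [0,t] and λ_V a Lipschitz constant of ∇V on a ball containing the range of x; consequently ∫₀^t φ'(τ)/(t−τ)^α dτ = −φ(0)/t^α − α ∫₀^t φ(τ)/(t−τ)^{α+1} dτ ≤ 0. -/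
open MeasureTheory Real Set Filter Topology
open scoped ENNReal NNReal

open scoped RealInnerProductSpace

/-- The auxiliary function φ(τ) = V(x(τ)) − V(x(t)) − ⟨∇V(x(t)), x(τ) − x(t)⟩. -/
noncomputable def phiAux {n : ℕ} (V : EuclideanSpace ℝ (Fin n) → ℝ)
    (x : ℝ → EuclideanSpace ℝ (Fin n)) (t τ : ℝ) : ℝ :=
  V (x τ) - V (x t) - ⟪gradient V (x t), x τ - x t⟫

/-!
`φ τ := phiAux V x t τ` is the Bregman divergence of `V` between `x τ` and `x t`. The first-order
condition for convexity, applied at both points, gives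
`0 ≤ φ τ ≤ ⟪∇V (x τ) - ∇V (x t), x τ - x t⟫ ≤ λ_V ‖x τ - x t‖²`, and Hölder continuity turns
the right-hand side into `λ_V H² (t - τ)^(2α)`. A convex function is locally Lipschitz, so `φ` is
Lipschitz on `[0, t]`. Integrating by parts against `(t - τ)^(-α)` on `[0, u]` and letting
`u → t`, the boundary term `φ u (t - u)^(-α) = O((t - u)^α)` vanishes; this is the identity, whose
right-hand side is `≤ 0` because `φ ≥ 0`.
-/

section Bregman

variable {F : Type*} [NormedAddCommGroup F] [InnerProductSpace ℝ F] [CompleteSpace F]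
  {V : F → ℝ} {s : Set F}

theorem ConvexOn.inner_gradient_le_sub (hV : ConvexOn ℝ s V) {a b : F} (ha : a ∈ s)
    (hb : b ∈ s) (hd : DifferentiableAt ℝ V a) :
    ⟪gradient V a, b - a⟫ ≤ V b - V a := by
  have hline : ConvexOn ℝ (AffineMap.lineMap a b ⁻¹' s) (V ∘ AffineMap.lineMap a b) :=
    hV.comp_affineMap _
  have hderiv : HasDerivAt (V ∘ AffineMap.lineMap a b) ⟪gradient V a, b - a⟫ (0 : ℝ) := by
    have hV' : HasFDerivAt V (InnerProductSpace.toDual ℝ F (gradient V a))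
        (AffineMap.lineMap (k := ℝ) a b 0) := by
      simpa using hd.hasGradientAt.hasFDerivAt
    simpa using hV'.comp_hasDerivAt (0 : ℝ) (AffineMap.hasDerivAt_lineMap (a := a) (b := b))
  simpa [slope_def_field] using
    hline.le_slope_of_hasDerivAt (x := 0) (y := 1) (by simpa using ha) (by simpa using hb)
      one_pos hderiv

noncomputable def bregmanDiv (V : F → ℝ) (y z : F) : ℝ := V y - V z - ⟪gradient V z, y - z⟫

theorem bregmanDiv_nonneg (hV : ConvexOn ℝ s V) {y z : F} (hy : y ∈ s) (hz : z ∈ s)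
    (hd : DifferentiableAt ℝ V z) : 0 ≤ bregmanDiv V y z := by
  have := hV.inner_gradient_le_sub hz hy hd
  rw [bregmanDiv]
  linarith

theorem bregmanDiv_le_inner (hV : ConvexOn ℝ s V) {y z : F} (hy : y ∈ s) (hz : z ∈ s)
    (hd : DifferentiableAt ℝ V y) :
    bregmanDiv V y z ≤ ⟪gradient V y - gradient V z, y - z⟫ := by
  have := hV.inner_gradient_le_sub hy hz hd
  rw [← neg_sub y z, inner_neg_right] at this
  rw [bregmanDiv, inner_sub_left]
  linarith

theorem bregmanDiv_le_mul_norm_sq (hV : ConvexOn ℝ s V) {y z : F} (hy : y ∈ s) (hz : z ∈ s)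
    (hd : DifferentiableAt ℝ V y) {L : ℝ}
    (hL : ‖gradient V y - gradient V z‖ ≤ L * ‖y - z‖) :
    bregmanDiv V y z ≤ L * ‖y - z‖ ^ 2 := calc
  bregmanDiv V y z ≤ ‖gradient V y - gradient V z‖ * ‖y - z‖ :=
    (bregmanDiv_le_inner hV hy hz hd).trans (real_inner_le_norm _ _)
  _ ≤ L * ‖y - z‖ * ‖y - z‖ := mul_le_mul_of_nonneg_right hL (norm_nonneg _)
  _ = L * ‖y - z‖ ^ 2 := by ring

theorem locallyLipschitz_bregmanDiv [FiniteDimensional ℝ F] (hV : ConvexOn ℝ univ V) (z : F) :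
    LocallyLipschitz fun y => bregmanDiv V y z := by
  have hlin : ContDiff ℝ 1 fun y => ⟪gradient V z, y - z⟫ :=
    contDiff_const.inner ℝ (contDiff_id.sub contDiff_const)
  exact (hV.locallyLipschitz.sub (LocallyLipschitz.const _)).sub hlin.locallyLipschitz

end Bregman

theorem LocallyLipschitz.exists_lipschitzOnWith_comp {X Y Z : Type*} [PseudoMetricSpace X]
    [PseudoMetricSpace Y] [PseudoMetricSpace Z] {f : Y → Z} (hf : LocallyLipschitz f)
    {g : X → Y} {s : Set X} {K : ℝ≥0} (hs : IsCompact s) (hg : LipschitzOnWith K g s) :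
    ∃ K', LipschitzOnWith K' (f ∘ g) s := by
  obtain ⟨K', hK'⟩ := hf.locallyLipschitzOn.exists_lipschitzOnWith_of_compact
    (hs.image_of_continuousOn hg.continuousOn)
  exact ⟨K' * K, hK'.comp hg (mapsTo_image g s)⟩

section WeightedIntegration

variable {f : ℝ → ℝ} {a t α β γ C : ℝ}

theorem intervalIntegrable_mul_rpow_of_abs_le_rpow (hat : a ≤ t)
    (hf : AEStronglyMeasurable f (volume.restrict (Ioo a t)))
    (hfC : ∀ τ ∈ Ioo a t, |f τ| ≤ C * (t - τ) ^ β) (hβγ : -1 < β + γ) :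
    IntervalIntegrable (fun τ => f τ * (t - τ) ^ γ) volume a t := by
  rw [intervalIntegrable_iff_integrableOn_Ioo_of_le hat]
  have hdom : IntervalIntegrable (fun τ => C * (t - τ) ^ (β + γ)) volume a t := by
    have := (intervalIntegral.intervalIntegrable_rpow' (a := 0) (b := t - a) hβγ).comp_sub_left t
    simpa using this.symm.const_mul C
  refine Integrable.mono' ((intervalIntegrable_iff_integrableOn_Ioo_of_le hat).1 hdom)
    (hf.mul (ContinuousOn.aestronglyMeasurable (fun τ hτ => ?_) measurableSet_Ioo)) ?_
  · exact ((continuousAt_const.sub continuousAt_id).rpow_const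
      (Or.inl (sub_pos.2 hτ.2).ne')).continuousWithinAt
  · filter_upwards [ae_restrict_mem measurableSet_Ioo] with τ hτ
    have hτt : 0 < t - τ := sub_pos.2 hτ.2
    rw [Real.norm_eq_abs, abs_mul, abs_of_pos (rpow_pos_of_pos hτt γ), rpow_add hτt,
      ← mul_assoc]
    exact mul_le_mul_of_nonneg_right (hfC τ hτ) (rpow_pos_of_pos hτt γ).le

theorem hasDerivAt_sub_rpow_neg {τ : ℝ} (hτ : τ < t) :
    HasDerivAt (fun σ => (t - σ) ^ (-α)) (α * (t - τ) ^ (-α - 1)) τ := by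
  have := ((hasDerivAt_id' τ).const_sub t).rpow_const (p := -α) (Or.inl (sub_pos.2 hτ).ne')
  convert this using 1
  ring

theorem integral_deriv_mul_rpow_neg_add_eq {u : ℝ} (hau : a ≤ u) (hut : u < t)
    (hf : AbsolutelyContinuousOnInterval f a u) :
    ∫ τ in a..u, (deriv f τ * (t - τ) ^ (-α) + α * (f τ * (t - τ) ^ (-α - 1)))
      = f u * (t - u) ^ (-α) - f a * (t - a) ^ (-α) := by
  have hlt : ∀ τ ∈ uIcc a u, τ < t := fun τ hτ => ((uIcc_of_le hau ▸ hτ).2).trans_lt hut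
  have hg : AbsolutelyContinuousOnInterval (fun σ => (t - σ) ^ (-α)) a u :=
    ContDiffOn.absolutelyContinuousOnInterval fun τ hτ =>
      ((contDiffAt_const.sub contDiffAt_id).rpow_const_of_ne (sub_pos.2 (hlt τ hτ)).ne')
        |>.contDiffWithinAt
  rw [← hf.integral_deriv_mul_eq_sub hg]
  refine intervalIntegral.integral_congr fun τ hτ => ?_
  rw [(hasDerivAt_sub_rpow_neg (hlt τ hτ)).deriv]
  ring

theorem tendsto_mul_sub_rpow_neg_of_abs_le_rpow (hαβ : α < β)
    (hfC : ∀ τ ∈ Ico a t, |f τ| ≤ C * (t - τ) ^ β) :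
    Tendsto (fun u => f u * (t - u) ^ (-α)) (𝓝[Ico a t] t) (𝓝 0) := by
  have hdom : Tendsto (fun u => C * (t - u) ^ (β - α)) (𝓝[Ico a t] t) (𝓝 0) := by
    have hcont : ContinuousAt (fun u => C * (t - u) ^ (β - α)) t :=
      continuousAt_const.mul
        ((continuousAt_const.sub continuousAt_id).rpow_const (Or.inr (sub_pos.2 hαβ).le))
    simpa [zero_rpow (sub_pos.2 hαβ).ne'] using hcont.tendsto.mono_left nhdsWithin_le_nhds
  refine squeeze_zero_norm' ?_ hdom
  filter_upwards [self_mem_nhdsWithin] with u hu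
  have hut : 0 < t - u := sub_pos.2 hu.2
  rw [Real.norm_eq_abs, abs_mul, abs_of_pos (rpow_pos_of_pos hut _), sub_eq_add_neg β,
    rpow_add hut, ← mul_assoc]
  exact mul_le_mul_of_nonneg_right (hfC u hu) (rpow_pos_of_pos hut _).le

theorem integral_deriv_mul_rpow_neg_add_eq_of_abs_le_rpow {K : ℝ≥0} (hat : a < t)
    (hαβ : α < β) (hf : LipschitzOnWith K f (Icc a t))
    (hfC : ∀ τ ∈ Icc a t, |f τ| ≤ C * (t - τ) ^ β)
    (hint : IntervalIntegrable
      (fun τ => deriv f τ * (t - τ) ^ (-α) + α * (f τ * (t - τ) ^ (-α - 1))) volume a t) :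
    ∫ τ in a..t, (deriv f τ * (t - τ) ^ (-α) + α * (f τ * (t - τ) ^ (-α - 1)))
      = -(f a * (t - a) ^ (-α)) := by
  have := right_nhdsWithin_Ico_neBot hat
  have hprimitive := intervalIntegral.continuousOn_primitive_interval' hint left_mem_uIcc
  rw [uIcc_of_le hat.le] at hprimitive
  refine tendsto_nhds_unique
    ((hprimitive t (right_mem_Icc.2 hat.le)).mono Ico_subset_Icc_self) ?_
  have hboundary := (tendsto_mul_sub_rpow_neg_of_abs_le_rpow hαβ
    fun τ hτ => hfC τ (Ico_subset_Icc_self hτ)).sub_const (f a * (t - a) ^ (-α))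
  rw [zero_sub] at hboundary
  refine hboundary.congr' ?_
  filter_upwards [self_mem_nhdsWithin] with u hu
  have hfu : LipschitzOnWith K f (uIcc a u) :=
    hf.mono (uIcc_subset_Icc (left_mem_Icc.2 hat.le) ⟨hu.1, hu.2.le⟩)
  exact (integral_deriv_mul_rpow_neg_add_eq hu.1 hu.2 hfu.absolutelyContinuousOnInterval).symm

theorem integral_deriv_div_rpow_eq {K : ℝ≥0} (hat : a < t) (hα : α < 1) (hαβ : α < β)
    (hf : LipschitzOnWith K f (Icc a t)) (hfC : ∀ τ ∈ Icc a t, |f τ| ≤ C * (t - τ) ^ β) :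
    ∫ τ in a..t, deriv f τ / (t - τ) ^ α
      = -f a / (t - a) ^ α - α * ∫ τ in a..t, f τ / (t - τ) ^ (α + 1) := by
  have hderiv : IntervalIntegrable (fun τ => deriv f τ * (t - τ) ^ (-α)) volume a t := by
    refine intervalIntegrable_mul_rpow_of_abs_le_rpow (C := K) (β := 0) hat.le
      (measurable_deriv f).aestronglyMeasurable (fun τ hτ => ?_) (by linarith)
    rw [rpow_zero, mul_one, ← Real.norm_eq_abs]
    exact norm_deriv_le_of_lipschitzOn (Icc_mem_nhds hτ.1 hτ.2) hf
  have hfun : IntervalIntegrable (fun τ => f τ * (t - τ) ^ (-α - 1)) volume a t :=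
    intervalIntegrable_mul_rpow_of_abs_le_rpow hat.le
      ((hf.continuousOn.mono Ioo_subset_Icc_self).aestronglyMeasurable measurableSet_Ioo)
      (fun τ hτ => hfC τ (Ioo_subset_Icc_self hτ)) (by linarith)
  have hsum := integral_deriv_mul_rpow_neg_add_eq_of_abs_le_rpow hat hαβ hf hfC
    (hderiv.add (hfun.const_mul α))
  rw [intervalIntegral.integral_add hderiv (hfun.const_mul α),
    intervalIntegral.integral_const_mul] at hsum
  have hdiv : ∀ τ ∈ uIcc a t, ∀ c γ : ℝ, c / (t - τ) ^ γ = c * (t - τ) ^ (-γ) := by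
    intro τ hτ c γ
    rw [rpow_neg (sub_nonneg.2 (uIcc_of_le hat.le ▸ hτ).2), div_eq_mul_inv]
  rw [intervalIntegral.integral_congr fun τ hτ => hdiv τ hτ (deriv f τ) α,
    intervalIntegral.integral_congr fun τ hτ => hdiv τ hτ (f τ) (α + 1),
    hdiv a left_mem_uIcc, neg_add']
  linarith

end WeightedIntegration

theorem convexity_key_inequality_general
    (t : ℝ) (ht : 0 < t) (n : ℕ) (α : ℝ) (hα : α ∈ Set.Ioo (0:ℝ) 1)
    (x : ℝ → EuclideanSpace ℝ (Fin n)) (K : ℝ≥0)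
    (hLip : LipschitzOnWith K x (Set.Icc (0:ℝ) t))
    (H : ℝ)
    (hHol : ∀ τ ∈ Set.Icc (0:ℝ) t, ∀ σ ∈ Set.Icc (0:ℝ) t,
      ‖x τ - x σ‖ ≤ H * |τ - σ| ^ α)
    (V : EuclideanSpace ℝ (Fin n) → ℝ)
    (hVconv : ConvexOn ℝ Set.univ V) (hVdiff : Differentiable ℝ V)
    (r : ℝ) (hrange : ∀ τ ∈ Set.Icc (0:ℝ) t, ‖x τ‖ ≤ r)
    (lamV : ℝ) (hlamV0 : 0 ≤ lamV)
    (hlamV : ∀ a b : EuclideanSpace ℝ (Fin n), ‖a‖ ≤ r → ‖b‖ ≤ r →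
      ‖gradient V a - gradient V b‖ ≤ lamV * ‖a - b‖) :
    (∀ τ ∈ Set.Icc (0:ℝ) t,
      0 ≤ phiAux V x t τ ∧ phiAux V x t τ ≤ lamV * H ^ 2 * (t - τ) ^ (2 * α)) ∧
    (∫ τ in (0:ℝ)..t, deriv (phiAux V x t) τ / (t - τ) ^ α)
      = -(phiAux V x t 0) / t ^ α - α * ∫ τ in (0:ℝ)..t, phiAux V x t τ / (t - τ) ^ (α + 1) ∧
    (∫ τ in (0:ℝ)..t, deriv (phiAux V x t) τ / (t - τ) ^ α) ≤ 0 := by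
  -- `phiAux V x t τ` is by definition `bregmanDiv V (x τ) (x t)`.
  have hbounds : ∀ τ ∈ Icc 0 t,
      0 ≤ phiAux V x t τ ∧ phiAux V x t τ ≤ lamV * H ^ 2 * (t - τ) ^ (2 * α) := by
    intro τ hτ
    have ht_mem : t ∈ Icc 0 t := right_mem_Icc.2 ht.le
    have hHolτ : ‖x τ - x t‖ ≤ H * (t - τ) ^ α := by
      simpa [abs_of_nonpos (sub_nonpos.2 hτ.2)] using hHol τ hτ t ht_mem
    refine ⟨bregmanDiv_nonneg hVconv trivial trivial (hVdiff _), ?_⟩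
    calc phiAux V x t τ ≤ lamV * ‖x τ - x t‖ ^ 2 :=
          bregmanDiv_le_mul_norm_sq hVconv trivial trivial (hVdiff _)
            (hlamV _ _ (hrange τ hτ) (hrange t ht_mem))
      _ ≤ lamV * (H * (t - τ) ^ α) ^ 2 := by gcongr
      _ = lamV * H ^ 2 * (t - τ) ^ (2 * α) := by
          rw [mul_pow, ← rpow_mul_natCast (sub_nonneg.2 hτ.2)]
          ring_nf
  obtain ⟨Kφ, hφ⟩ := (locallyLipschitz_bregmanDiv hVconv (x t)).exists_lipschitzOnWith_comp
    isCompact_Icc hLip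
  have hidentity := integral_deriv_div_rpow_eq (f := phiAux V x t) (a := 0) ht hα.2
    (by linarith [hα.1] : α < 2 * α) hφ
    fun τ hτ => (abs_of_nonneg (hbounds τ hτ).1).symm ▸ (hbounds τ hτ).2
  rw [sub_zero] at hidentity
  refine ⟨hbounds, hidentity, ?_⟩
  have hintegral_nonneg : 0 ≤ ∫ τ in (0:ℝ)..t, phiAux V x t τ / (t - τ) ^ (α + 1) :=
    intervalIntegral.integral_nonneg ht.le fun τ hτ =>
      div_nonneg (hbounds τ hτ).1 (rpow_nonneg (sub_nonneg.2 hτ.2) _)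
  rw [hidentity, sub_nonpos]
  exact (div_nonpos_of_nonpos_of_nonneg (neg_nonpos.2 (hbounds 0 (left_mem_Icc.2 ht.le)).1)
    (rpow_nonneg ht.le α)).trans (mul_nonneg hα.1.le hintegral_nonneg)

/-- key inequality 0 ≤ φ(τ) ≤ λ_V H² (t−τ)^{2α} on [0,t] and the
resulting integral identity and sign estimate. -/
theorem convexity_key_inequality
    (t : ℝ) (ht : 0 < t) (n : ℕ) (α : ℝ) (hα : α ∈ Set.Ioo (0:ℝ) 1)
    (x : ℝ → EuclideanSpace ℝ (Fin n)) (K : ℝ≥0)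
    (hLip : LipschitzOnWith K x (Set.Icc (0:ℝ) t))
    (H : ℝ) (hH : 0 ≤ H)
    (hHol : ∀ τ ∈ Set.Icc (0:ℝ) t, ∀ σ ∈ Set.Icc (0:ℝ) t,
      ‖x τ - x σ‖ ≤ H * |τ - σ| ^ α)
    (V : EuclideanSpace ℝ (Fin n) → ℝ)
    (hVconv : ConvexOn ℝ Set.univ V) (hVdiff : Differentiable ℝ V)
    (r : ℝ) (hrange : ∀ τ ∈ Set.Icc (0:ℝ) t, ‖x τ‖ ≤ r)
    (lamV : ℝ) (hlamV0 : 0 ≤ lamV)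
    (hlamV : ∀ a b : EuclideanSpace ℝ (Fin n), ‖a‖ ≤ r → ‖b‖ ≤ r →
      ‖gradient V a - gradient V b‖ ≤ lamV * ‖a - b‖) :
    (∀ τ ∈ Set.Icc (0:ℝ) t,
      0 ≤ phiAux V x t τ ∧ phiAux V x t τ ≤ lamV * H ^ 2 * (t - τ) ^ (2 * α)) ∧
    (∫ τ in (0:ℝ)..t, deriv (phiAux V x t) τ / (t - τ) ^ α)
      = -(phiAux V x t 0) / t ^ α - α * ∫ τ in (0:ℝ)..t, phiAux V x t τ / (t - τ) ^ (α + 1) ∧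
    (∫ τ in (0:ℝ)..t, deriv (phiAux V x t) τ / (t - τ) ^ α) ≤ 0 :=
  convexity_key_inequality_general t ht n α hα x K hLip H hHol V hVconv hVdiff r hrange lamV hlamV0
    hlamV
end
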